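/- Decision criterion for Postulate PI: if the action theory ⟨S, E_a, X_a, I_a⟩ with dependence relation ⇝ satisfies Postulate PS, then it satisfies Postulate PI if and only if the set IMPI_a of implicit inexecutability laws computed from ⟨S, E_a, I_a⟩ and ⇝ is empty (i.e., every candidate (⋀antecedents(Ê) ∧ ¬χ) → [a]⊥ with S-consistent antecedent, χ ∈ NewCons(S, ⋀consequents(Ê)) and all literals of χ independent of a, is already a K-consequence of S ∪ I_a). -/

import Mathlib

/-! Classical propositional formulas. -/
inductive PForm (α : Type) : Type
  | atom : α → PForm α
  | fls  : PForm α
  | not  : PForm α → PForm α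
  | and  : PForm α → PForm α → PForm α
  | or   : PForm α → PForm α → PForm α
  | imp  : PForm α → PForm α → PForm α

def PForm.Sat {α : Type} (v : α → Prop) : PForm α → Prop
  | atom p => v p
  | fls => False
  | not φ => ¬ Sat v φ
  | and φ ψ => Sat v φ ∧ Sat v ψ
  | or φ ψ => Sat v φ ∨ Sat v ψ
  | imp φ ψ => Sat v φ → Sat v ψ

/-- Classical (propositional) global consequence. -/
def EntailsCl {α : Type} (Γ : Set (PForm α)) (φ : PForm α) : Prop :=
  ∀ v : α → Prop, (∀ ψ ∈ Γ, PForm.Sat v ψ) → PForm.Sat v φ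

/-- Multimodal formulas with one box per action. -/
inductive MForm (Act α : Type) : Type
  | atom : α → MForm Act α
  | fls  : MForm Act α
  | not  : MForm Act α → MForm Act α
  | and  : MForm Act α → MForm Act α → MForm Act α
  | or   : MForm Act α → MForm Act α → MForm Act α
  | imp  : MForm Act α → MForm Act α → MForm Act α
  | box  : Act → MForm Act α → MForm Act α

def PForm.toM {Act α : Type} : PForm α → MForm Act α
  | .atom p => .atom p
  | .fls => .fls
  | .not φ => .not φ.toM
  | .and φ ψ => .and φ.toM ψ.toM
  | .or φ ψ => .or φ.toM ψ.toM
  | .imp φ ψ => .imp φ.toM ψ.toM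

/-- A Kripke model for multimodal K. -/
structure KModel (Act α : Type) where
  W : Type
  R : Act → W → W → Prop
  V : W → α → Prop

def MForm.Sat {Act α : Type} (M : KModel Act α) : M.W → MForm Act α → Prop
  | w, atom p => M.V w p
  | _, fls => False
  | w, not φ => ¬ Sat M w φ
  | w, and φ ψ => Sat M w φ ∧ Sat M w ψ
  | w, or φ ψ => Sat M w φ ∨ Sat M w ψ
  | w, imp φ ψ => Sat M w φ → Sat M w ψ
  | w, box a φ => ∀ w', M.R a w w' → Sat M w' φ

/-- Global truth in a model. -/
def Glob {Act α : Type} (M : KModel Act α) (Φ : MForm Act α) : Prop :=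
  ∀ w : M.W, MForm.Sat M w Φ

/-- Global consequence in multimodal K. -/
def ConsK {Act α : Type} (Γ : Set (MForm Act α)) (Φ : MForm Act α) : Prop :=
  ∀ M : KModel Act α, (∀ Ψ ∈ Γ, Glob M Ψ) → Glob M Φ

/-- Literals. -/
abbrev Lit (α : Type) := α × Bool

def Lit.Sat {α : Type} (v : α → Prop) (l : Lit α) : Prop :=
  if l.2 then v l.1 else ¬ v l.1

/-- A dependence relation `⇝ ⊆ Act × Lit`. -/
abbrev Dep (Act α : Type) := Act → Lit α → Prop

/-- `⇝`-models: along `R a`, literals independent of `a` persist. -/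
def IsDepModel {Act α : Type} (dep : Dep Act α) (M : KModel Act α) : Prop :=
  ∀ (a : Act) (w w' : M.W), M.R a w w' → ∀ p : α,
    (¬ dep a (p, true) → ¬ M.V w p → ¬ M.V w' p) ∧
    (¬ dep a (p, false) → M.V w p → M.V w' p)

/-- Dependence-based global consequence. -/
def ConsDep {Act α : Type} (dep : Dep Act α) (Γ : Set (MForm Act α)) (Φ : MForm Act α) : Prop :=
  ∀ M : KModel Act α, IsDepModel dep M → (∀ Ψ ∈ Γ, Glob M Ψ) → Glob M Φ

/-- An action theory: static laws `S`, effect laws `E` (antecedent/consequent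
pairs), executability laws `X` (antecedents), inexecutability laws `I`
(antecedents). -/
structure ActionTheory (Act α : Type) where
  S : Set (PForm α)
  E : Act → Set (PForm α × PForm α)
  X : Act → Set (PForm α)
  I : Act → Set (PForm α)

/-- `⟨a⟩Φ`. -/
def MForm.diam {Act α : Type} (a : Act) (Φ : MForm Act α) : MForm Act α :=
  .not (.box a (.not Φ))

/-- Effect law `A → [a]C`. -/
def effLaw {Act α : Type} (a : Act) (e : PForm α × PForm α) : MForm Act α :=
  .imp e.1.toM (.box a e.2.toM)

/-- Executability law `A → ⟨a⟩⊤`. -/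
def exeLaw {Act α : Type} (a : Act) (A : PForm α) : MForm Act α :=
  .imp A.toM (MForm.diam a (.not .fls))

/-- Inexecutability law `A → [a]⊥`. -/
def inexLaw {Act α : Type} (a : Act) (A : PForm α) : MForm Act α :=
  .imp A.toM (.box a .fls)

variable {Act α : Type}

def staticForms (T : ActionTheory Act α) : Set (MForm Act α) := PForm.toM '' T.S
def effForms (T : ActionTheory Act α) (a : Act) : Set (MForm Act α) := effLaw a '' T.E a
def exeForms (T : ActionTheory Act α) (a : Act) : Set (MForm Act α) := exeLaw a '' T.X a
def inexForms (T : ActionTheory Act α) (a : Act) : Set (MForm Act α) := inexLaw a '' T.I a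

/-- The action theory of the single action `a`:  `S ∪ E_a ∪ X_a ∪ I_a`. -/
def formsFor (T : ActionTheory Act α) (a : Act) : Set (MForm Act α) :=
  staticForms T ∪ effForms T a ∪ exeForms T a ∪ inexForms T a

/-- The whole action theory:  `S ∪ E ∪ X ∪ I`. -/
def allForms (T : ActionTheory Act α) : Set (MForm Act α) :=
  staticForms T ∪ (⋃ a, effForms T a) ∪ (⋃ a, exeForms T a) ∪ (⋃ a, inexForms T a)

/-- Postulate PS for action `a`: no implicit static laws. -/
def PS (T : ActionTheory Act α) (dep : Dep Act α) (a : Act) : Prop :=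
  ∀ φ : PForm α, ConsDep dep (formsFor T a) φ.toM → EntailsCl T.S φ

/-- Postulate PS*: no implicit static laws for the whole theory. -/
def PSstar (T : ActionTheory Act α) (dep : Dep Act α) : Prop :=
  ∀ φ : PForm α, ConsDep dep (allForms T) φ.toM → EntailsCl T.S φ

/-- Postulate PI for action `a`: no implicit inexecutability laws. -/
def PIpost (T : ActionTheory Act α) (dep : Dep Act α) (a : Act) : Prop :=
  ∀ A : PForm α, ConsDep dep (formsFor T a) (inexLaw a A) →
    ConsK (staticForms T ∪ inexForms T a) (inexLaw a A)

/-- Postulate PI*: no implicit inexecutability laws for the whole theory. -/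
def PIstar (T : ActionTheory Act α) (dep : Dep Act α) : Prop :=
  ∀ (a : Act) (A : PForm α), ConsDep dep (allForms T) (inexLaw a A) →
    ConsK (staticForms T ∪ ⋃ a', inexForms T a') (inexLaw a A)

/-! Clauses, prime implicates, new consequences. -/

abbrev Clause (α : Type) := Finset (Lit α)

def Clause.Sat {α : Type} (v : α → Prop) (c : Clause α) : Prop :=
  ∃ l ∈ c, Lit.Sat v l

def EntailsC {α : Type} (Γ : Set (PForm α)) (c : Clause α) : Prop :=
  ∀ v : α → Prop, (∀ φ ∈ Γ, PForm.Sat v φ) → Clause.Sat v c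

def ClEntails {α : Type} (c c' : Clause α) : Prop :=
  ∀ v : α → Prop, Clause.Sat v c → Clause.Sat v c'

/-- Prime implicates of (the conjunction of) `Γ`. -/
def PrimImp {α : Type} (Γ : Set (PForm α)) : Set (Clause α) :=
  {c | EntailsC Γ c ∧ ∀ c' : Clause α, EntailsC Γ c' → ClEntails c' c → ClEntails c c'}

/-- `NewCons(Γ, ψ) = PI(Γ ∧ ψ) \ PI(Γ)`. -/
def NewCons {α : Type} (Γ : Set (PForm α)) (ψ : PForm α) : Set (Clause α) :=
  PrimImp (Γ ∪ {ψ}) \ PrimImp Γ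

def Lit.toForm {α : Type} (l : Lit α) : PForm α :=
  if l.2 then .atom l.1 else .not (.atom l.1)

def Lit.neg {α : Type} (l : Lit α) : Lit α := (l.1, !l.2)

noncomputable def Clause.toForm {α : Type} (c : Clause α) : PForm α :=
  c.toList.foldr (fun l φ => (Lit.toForm l).or φ) .fls

/-- Conjunction of a list of formulas. -/
def conjList {α : Type} (L : List (PForm α)) : PForm α :=
  L.foldr .and (.not .fls)

/-- Frame axioms `¬l → [a]¬l` for literals `l` independent of `a`. -/
def FRA {Act α : Type} (dep : Dep Act α) (a : Act) : Set (MForm Act α) :=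
  { Φ | ∃ l : Lit α, ¬ dep a l ∧
        Φ = .imp ((Lit.neg l).toForm.toM) (.box a ((Lit.neg l).toForm.toM)) }

/-- The candidate implicit inexecutability laws
`(⋀antecedents(Ê) ∧ ¬χ) → [a]⊥` for `Ê ⊆ E_a`,
`χ ∈ NewCons(S, ⋀consequents(Ê))` with all literals of `χ` independent of `a`
and `S`-consistent antecedent. -/
def IMPI {Act α : Type} (T : ActionTheory Act α) (dep : Dep Act α) (a : Act) :
    Set (MForm Act α) :=
  { Φ | ∃ (L : List (PForm α × PForm α)) (χ : Clause α),
      (∀ e ∈ L, e ∈ T.E a) ∧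
      χ ∈ NewCons T.S (conjList (L.map Prod.snd)) ∧
      (∀ l ∈ χ, ¬ dep a l) ∧
      (∃ v : α → Prop, (∀ ψ ∈ T.S, PForm.Sat v ψ) ∧
        PForm.Sat v (conjList (L.map Prod.fst)) ∧ ¬ Clause.Sat v χ) ∧
      Φ = inexLaw a (.and (conjList (L.map Prod.fst)) (.not χ.toForm)) }

/-- Output of Algorithm 2: the candidate implicit inexecutability laws that
are not already K-consequences of `S ∪ I_a`. -/
def IMPIalg {Act α : Type} (T : ActionTheory Act α) (dep : Dep Act α) (a : Act) :
    Set (MForm Act α) :=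
  { Φ ∈ IMPI T dep a | ¬ ConsK (staticForms T ∪ inexForms T a) Φ }

/-
Soundness: if `Ê ⊆ E_a` and the clause `χ` follows from `S ∧ ⋀consequents(Ê)`, then in a
`⇝`-model every `a`-successor of a state satisfying `⋀antecedents(Ê)` satisfies `χ`; when all
literals of `χ` are independent of `a`, a state falsifying `χ` keeps falsifying it, so such a
state has no `a`-successor.

Completeness: when PS holds, the `⇝`-model whose states are the valuations satisfying `S`,
with every "legal" transition allowed, validates the theory. A state without legal successor
falsifies the clause of all `a`-independent literals false in it; finitely many effect laws
witness this, and a prime implicate inside that clause yields a law of `IMPI_a` applying to the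
state. So if every law of `IMPI_a` is a K-consequence of `S ∪ I_a`, each `⇝`-consequence
`A → [a]⊥` fails only at states already blocked by `S ∪ I_a`.
-/

@[simp]
theorem MForm.sat_toM (M : KModel Act α) (w : M.W) (φ : PForm α) :
    MForm.Sat M w φ.toM ↔ PForm.Sat (M.V w) φ := by
  induction φ with
  | atom p => exact Iff.rfl
  | fls => exact Iff.rfl
  | not φ ih => simp only [PForm.toM, MForm.Sat, PForm.Sat, ih]
  | and φ ψ ih₁ ih₂ => simp only [PForm.toM, MForm.Sat, PForm.Sat, ih₁, ih₂]
  | or φ ψ ih₁ ih₂ => simp only [PForm.toM, MForm.Sat, PForm.Sat, ih₁, ih₂]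
  | imp φ ψ ih₁ ih₂ => simp only [PForm.toM, MForm.Sat, PForm.Sat, ih₁, ih₂]

@[simp]
theorem sat_conjList {v : α → Prop} (L : List (PForm α)) :
    PForm.Sat v (conjList L) ↔ ∀ φ ∈ L, PForm.Sat v φ := by
  induction L with
  | nil => simp [conjList, PForm.Sat]
  | cons φ L ih => simp_all [conjList, PForm.Sat]

theorem Lit.sat_iff {v : α → Prop} (l : Lit α) : Lit.Sat v l ↔ (v l.1 ↔ l.2 = true) := by
  rcases l with ⟨p, _ | _⟩ <;> simp [Lit.Sat]

@[simp]
theorem Lit.sat_toForm {v : α → Prop} (l : Lit α) : PForm.Sat v l.toForm ↔ Lit.Sat v l := by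
  rcases l with ⟨p, _ | _⟩ <;> simp [Lit.toForm, Lit.Sat, PForm.Sat]

@[simp]
theorem Clause.sat_toForm {v : α → Prop} (c : Clause α) :
    PForm.Sat v c.toForm ↔ Clause.Sat v c := by
  have foldr_sat : ∀ L : List (Lit α),
      PForm.Sat v (L.foldr (fun l φ => l.toForm.or φ) .fls) ↔ ∃ l ∈ L, Lit.Sat v l := by
    intro L
    induction L with
    | nil => simp [PForm.Sat]
    | cons l L ih => simp [PForm.Sat, ih]
  simp [Clause.toForm, Clause.Sat, foldr_sat]

theorem sat_diam_top (M : KModel Act α) (w : M.W) (a : Act) :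
    MForm.Sat M w (MForm.diam a (.not .fls)) ↔ ∃ w', M.R a w w' := by
  simp [MForm.diam, MForm.Sat]

@[simp]
theorem sat_effLaw (M : KModel Act α) (w : M.W) (a : Act) (e : PForm α × PForm α) :
    MForm.Sat M w (effLaw a e) ↔
      (PForm.Sat (M.V w) e.1 → ∀ w', M.R a w w' → PForm.Sat (M.V w') e.2) := by
  simp [effLaw, MForm.Sat]

@[simp]
theorem sat_exeLaw (M : KModel Act α) (w : M.W) (a : Act) (A : PForm α) :
    MForm.Sat M w (exeLaw a A) ↔ (PForm.Sat (M.V w) A → ∃ w', M.R a w w') := by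
  simp [exeLaw, MForm.Sat, sat_diam_top]

@[simp]
theorem sat_inexLaw (M : KModel Act α) (w : M.W) (a : Act) (A : PForm α) :
    MForm.Sat M w (inexLaw a A) ↔ (PForm.Sat (M.V w) A → ∀ w', ¬ M.R a w w') := by
  simp [inexLaw, MForm.Sat]

theorem isDepModel_iff_lit (dep : Dep Act α) (M : KModel Act α) :
    IsDepModel dep M ↔ ∀ (a : Act) (w w' : M.W), M.R a w w' →
      ∀ l : Lit α, ¬ dep a l → ¬ Lit.Sat (M.V w) l → ¬ Lit.Sat (M.V w') l := by
  refine forall₃_congr fun a w w' => imp_congr_right fun _ => ?_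
  constructor
  · rintro h ⟨p, _ | _⟩ hl <;> simp only [Lit.Sat, Bool.false_eq_true, if_false, if_true, not_not]
    exacts [(h p).2 hl, (h p).1 hl]
  · intro h p
    exact ⟨h (p, true), fun hl hp => not_not.mp (h (p, false) hl (not_not_intro hp))⟩

theorem ClEntails.of_subset {c c' : Clause α} (h : c ⊆ c') : ClEntails c c' :=
  fun _ ⟨l, hl, hs⟩ => ⟨l, h hl, hs⟩

theorem ClEntails.subset {c c' : Clause α} (h : ClEntails c c') (hc' : ∃ v, ¬ Clause.Sat v c') :
    c ⊆ c' := by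
  classical
  intro l hl
  by_contra hl'
  obtain ⟨v, hv⟩ := hc'
  -- make `l` true and change nothing else: a literal of `c'` true afterwards must be `l` itself
  obtain ⟨l', hl'c', hsat⟩ := h (Function.update v l.1 (l.2 = true)) ⟨l, hl, by simp [Lit.sat_iff]⟩
  by_cases hvar : l'.1 = l.1
  · rw [Lit.sat_iff, hvar, Function.update_self] at hsat
    exact hl' (Prod.ext hvar (Bool.coe_iff_coe.mp hsat).symm ▸ hl'c')
  · rw [Lit.sat_iff, Function.update_of_ne hvar, ← Lit.sat_iff] at hsat
    exact hv ⟨l', hl'c', hsat⟩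

theorem exists_subset_mem_primImp {Γ : Set (PForm α)} {χ : Clause α} (hχ : EntailsC Γ χ)
    (hfals : ∃ v, ¬ Clause.Sat v χ) : ∃ χ' ⊆ χ, χ' ∈ PrimImp Γ := by
  obtain ⟨χ', hsub, hmin⟩ := exists_minimal_le_of_wellFoundedLT (EntailsC Γ) χ hχ
  have hfals' : ∃ v, ¬ Clause.Sat v χ' :=
    hfals.imp fun v hv hs => hv (ClEntails.of_subset hsub v hs)
  refine ⟨χ', hsub, hmin.prop, fun c hc hcχ' => ClEntails.of_subset ?_⟩
  exact hmin.le_of_le hc (hcχ'.subset hfals')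

theorem exists_list_forall_exists_mem {ι β : Type*} [Finite ι] {s : Set β} {P : ι → Prop}
    {Q : ι → β → Prop} (h : ∀ i, P i → ∃ b ∈ s, Q i b) :
    ∃ L : List β, (∀ b ∈ L, b ∈ s) ∧ ∀ i, P i → ∃ b ∈ L, Q i b := by
  choose g hgs hgQ using h
  have hfin : (Set.range fun i : {i // P i} => g i.1 i.2).Finite := Set.finite_range _
  refine ⟨hfin.toFinset.toList, ?_, fun i hi => ⟨g i hi, ?_, hgQ i hi⟩⟩
  · simp only [Finset.mem_toList, Set.Finite.mem_toFinset, Set.mem_range]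
    rintro _ ⟨⟨i, hi⟩, rfl⟩
    exact hgs i hi
  · simpa using ⟨i, hi, rfl⟩

section ActionTheory

variable (T : ActionTheory Act α) (dep : Dep Act α) (a : Act)

/-- `u'` can follow `u` in a `⇝`-model of `S ∪ E_a`. -/
def IsLegalSucc (u u' : α → Prop) : Prop :=
  (∀ φ ∈ T.S, PForm.Sat u' φ) ∧
    (∀ e ∈ T.E a, PForm.Sat u e.1 → PForm.Sat u' e.2) ∧
    ∀ l : Lit α, ¬ dep a l → ¬ Lit.Sat u l → ¬ Lit.Sat u' l

theorem consDep_of_mem {Γ : Set (MForm Act α)} {Φ : MForm Act α} (h : Φ ∈ Γ) :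
    ConsDep dep Γ Φ :=
  fun _ _ hΓ => hΓ Φ h

theorem consDep_candidate {L : List (PForm α × PForm α)} {χ : Clause α}
    (hL : ∀ e ∈ L, e ∈ T.E a) (hχ : EntailsC (T.S ∪ {conjList (L.map Prod.snd)}) χ)
    (hind : ∀ l ∈ χ, ¬ dep a l) :
    ConsDep dep (formsFor T a) (inexLaw a (.and (conjList (L.map Prod.fst)) (.not χ.toForm))) := by
  intro M hdep hM w
  simp only [sat_inexLaw, PForm.Sat, sat_conjList, List.mem_map, Clause.sat_toForm]
  rintro ⟨hante, hnχ⟩ w' hr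
  have hS : ∀ φ ∈ T.S, PForm.Sat (M.V w') φ := fun φ hφ => by
    simpa using hM _ (Or.inl (Or.inl (Or.inl ⟨φ, hφ, rfl⟩))) w'
  have hcons : PForm.Sat (M.V w') (conjList (L.map Prod.snd)) := by
    simp only [sat_conjList, List.mem_map]
    rintro _ ⟨e, he, rfl⟩
    have heff := hM _ (Or.inl (Or.inl (Or.inr ⟨e, hL e he, rfl⟩))) w
    exact (sat_effLaw M w a e).mp heff (hante _ ⟨e, he, rfl⟩) w' hr
  obtain ⟨l, hl, hsat⟩ := hχ _ fun φ hφ => hφ.elim (hS φ) fun h => (Set.eq_of_mem_singleton h) ▸ hcons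
  exact (isDepModel_iff_lit dep M).mp hdep a w w' hr l (hind l hl) (fun h => hnχ ⟨l, hl, h⟩) hsat

theorem IMPIalg_eq_empty_of_PIpost (hPI : PIpost T dep a) : IMPIalg T dep a = ∅ := by
  refine Set.eq_empty_iff_forall_notMem.mpr ?_
  rintro _ ⟨⟨L, χ, hL, hnew, hind, -, rfl⟩, hnK⟩
  exact hnK (hPI _ (consDep_candidate T dep a hL hnew.1.1 hind))

open Classical in
noncomputable def frameClause [Fintype α] (u : α → Prop) : Clause α :=
  Finset.univ.filter fun l => ¬ dep a l ∧ ¬ Lit.Sat u l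

theorem not_sat_frameClause_iff [Fintype α] {u u' : α → Prop} :
    ¬ Clause.Sat u' (frameClause dep a u) ↔
      ∀ l : Lit α, ¬ dep a l → ¬ Lit.Sat u l → ¬ Lit.Sat u' l := by
  simp [frameClause, Clause.Sat]

theorem exists_candidate_of_not_exists_isLegalSucc [Fintype α] {u : α → Prop}
    (hu : ∀ φ ∈ T.S, PForm.Sat u φ) (hno : ¬ ∃ u', IsLegalSucc T dep a u u') :
    ∃ (L : List (PForm α × PForm α)) (χ : Clause α), (∀ e ∈ L, e ∈ T.E a) ∧
      χ ∈ NewCons T.S (conjList (L.map Prod.snd)) ∧ (∀ l ∈ χ, ¬ dep a l) ∧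
      PForm.Sat u (conjList (L.map Prod.fst)) ∧ ¬ Clause.Sat u χ := by
  have hblocked : ∀ u' : α → Prop,
      (∀ φ ∈ T.S, PForm.Sat u' φ) ∧ ¬ Clause.Sat u' (frameClause dep a u) →
      ∃ e ∈ {e | e ∈ T.E a ∧ PForm.Sat u e.1}, ¬ PForm.Sat u' e.2 := by
    rintro u' ⟨hS, hframe⟩
    by_contra! heff
    exact hno ⟨u', hS, fun e he h₁ => heff e ⟨he, h₁⟩, (not_sat_frameClause_iff dep a).mp hframe⟩
  obtain ⟨L, hLE, hLcover⟩ := exists_list_forall_exists_mem hblocked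
  have hentails : EntailsC (T.S ∪ {conjList (L.map Prod.snd)}) (frameClause dep a u) := by
    intro u' hu'
    simp only [Set.mem_union, Set.mem_singleton_iff, or_imp, forall_and, forall_eq,
      sat_conjList, List.mem_map] at hu'
    by_contra hframe
    obtain ⟨e, he, hne⟩ := hLcover u' ⟨hu'.1, hframe⟩
    exact hne (hu'.2 _ ⟨e, he, rfl⟩)
  have hfalse : ¬ Clause.Sat u (frameClause dep a u) :=
    (not_sat_frameClause_iff dep a).mpr fun _ _ h => h
  obtain ⟨χ, hsub, hprime⟩ := exists_subset_mem_primImp hentails ⟨u, hfalse⟩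
  have hχfalse : ¬ Clause.Sat u χ := fun h => hfalse (ClEntails.of_subset hsub u h)
  refine ⟨L, χ, fun e he => (hLE e he).1, ⟨hprime, fun hS => hχfalse (hS.1 u hu)⟩,
    fun l hl => ?_, ?_, hχfalse⟩
  · have := hsub hl
    simp only [frameClause, Finset.mem_filter] at this
    exact this.2.1
  · simp only [sat_conjList, List.mem_map]
    rintro _ ⟨e, he, rfl⟩
    exact (hLE e he).2

variable {T dep a}

theorem PS.not_sat_and {u : α → Prop} (hPS : PS T dep a) (hu : ∀ φ ∈ T.S, PForm.Sat u φ)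
    {A B : PForm α} (hA : A ∈ T.X a) (hB : ConsDep dep (formsFor T a) (inexLaw a B)) :
    ¬ (PForm.Sat u B ∧ PForm.Sat u A) := by
  have hcons : ConsDep dep (formsFor T a) (PForm.not (.and B A)).toM := by
    intro M hdep hM w
    simp only [MForm.sat_toM, PForm.Sat]
    rintro ⟨hwB, hwA⟩
    obtain ⟨w', hr⟩ := (sat_exeLaw M w a A).mp (hM _ (Or.inl (Or.inr ⟨A, hA, rfl⟩)) w) hwA
    exact (sat_inexLaw M w a B).mp (hB M hdep hM w) hwB w' hr
  exact hPS _ hcons u hu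

theorem PS.exists_isLegalSucc [Fintype α] {u : α → Prop} (hPS : PS T dep a)
    (hu : ∀ φ ∈ T.S, PForm.Sat u φ) {A : PForm α} (hA : A ∈ T.X a) (huA : PForm.Sat u A) :
    ∃ u', IsLegalSucc T dep a u u' := by
  by_contra hno
  obtain ⟨L, χ, hL, hnew, hind, hante, hχ⟩ :=
    exists_candidate_of_not_exists_isLegalSucc T dep a hu hno
  exact hPS.not_sat_and hu hA (consDep_candidate T dep a hL hnew.1.1 hind)
    ⟨⟨hante, fun h => hχ ((Clause.sat_toForm χ).mp h)⟩, huA⟩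

variable (T dep a)

def canonicalModel : KModel Act α where
  W := {u : α → Prop // ∀ φ ∈ T.S, PForm.Sat u φ}
  R b u u' := b = a ∧ (∀ B ∈ T.I a, ¬ PForm.Sat u.1 B) ∧ IsLegalSucc T dep a u.1 u'.1
  V u := u.1

theorem isDepModel_canonicalModel : IsDepModel dep (canonicalModel T dep a) := by
  rw [isDepModel_iff_lit]
  rintro _ u u' ⟨rfl, -, -, -, hpersist⟩
  exact hpersist

theorem glob_canonicalModel [Fintype α] (hPS : PS T dep a) :
    ∀ Ψ ∈ formsFor T a, Glob (canonicalModel T dep a) Ψ := by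
  rintro _ (((⟨φ, hφ, rfl⟩ | ⟨e, he, rfl⟩) | ⟨A, hA, rfl⟩) | ⟨B, hB, rfl⟩) u
  · exact (MForm.sat_toM _ u φ).mpr (u.2 φ hφ)
  · simpa using fun h₁ u' hr => hr.2.2.2.1 e he h₁
  · rw [sat_exeLaw]
    intro huA
    obtain ⟨u', hu'⟩ := hPS.exists_isLegalSucc u.2 hA huA
    have hnotI : ∀ B ∈ T.I a, ¬ PForm.Sat u.1 B := fun B hB huB =>
      hPS.not_sat_and u.2 hA (consDep_of_mem dep (Or.inr ⟨B, hB, rfl⟩)) ⟨huB, huA⟩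
    exact ⟨⟨u', hu'.1⟩, rfl, hnotI, hu'⟩
  · simpa using fun h₁ u' hr => hr.2.1 B hB h₁

theorem PIpost_of_IMPIalg_eq_empty [Fintype α] (hPS : PS T dep a)
    (hIMPI : IMPIalg T dep a = ∅) : PIpost T dep a := by
  intro A hA N hN w
  rw [sat_inexLaw]
  intro hwA w' hr
  have hS : ∀ φ ∈ T.S, PForm.Sat (N.V w) φ := fun φ hφ => by
    simpa using hN _ (Or.inl ⟨φ, hφ, rfl⟩) w
  by_cases hsucc : ∃ u', IsLegalSucc T dep a (N.V w) u'
  · obtain ⟨u', hu'⟩ := hsucc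
    have hnotI : ∀ B ∈ T.I a, ¬ PForm.Sat (N.V w) B := fun B hB hwB =>
      (sat_inexLaw N w a B).mp (hN _ (Or.inr ⟨B, hB, rfl⟩) w) hwB w' hr
    exact (sat_inexLaw _ _ a A).mp
      (hA _ (isDepModel_canonicalModel T dep a) (glob_canonicalModel T dep a hPS) ⟨N.V w, hS⟩)
      hwA ⟨u', hu'.1⟩ ⟨rfl, hnotI, hu'⟩
  · obtain ⟨L, χ, hL, hnew, hind, hante, hχ⟩ :=
      exists_candidate_of_not_exists_isLegalSucc T dep a hS hsucc
    have hK : ConsK (staticForms T ∪ inexForms T a)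
        (inexLaw a (.and (conjList (L.map Prod.fst)) (.not χ.toForm))) := by
      by_contra hnK
      exact (Set.eq_empty_iff_forall_notMem.mp hIMPI) _
        ⟨⟨L, χ, hL, hnew, hind, ⟨N.V w, hS, hante, hχ⟩, rfl⟩, hnK⟩
    exact (sat_inexLaw N w a _).mp (hK N hN w)
      ⟨hante, fun h => hχ ((Clause.sat_toForm χ).mp h)⟩ w' hr

end ActionTheory

/-- Theorem 7: if the theory for `a` satisfies PS, then it
satisfies PI iff the computed set of implicit inexecutability laws is empty. -/
theorem stmt_18 [Fintype α] {Act : Type} (T : ActionTheory Act α) (dep : Dep Act α)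
    (a : Act) (hPS : PS T dep a) :
    PIpost T dep a ↔ IMPIalg T dep a = ∅ :=
  ⟨IMPIalg_eq_empty_of_PIpost T dep a, PIpost_of_IMPIalg_eq_empty T dep a hPS⟩
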